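/- (Independence ⇒ dependence axioms on modular lattices) Let L be a finite modular lattice and I a supermatroid on L, and set D = L \ I. Then: (D2) for all D₁, D₂ ∈ D with D₁, D₂ ⋖ D₁ ∨ D₂, and all Z ⋖ D₁ ∨ D₂ with Z ≠ D₁, Z ≠ D₂, and D₁ ∧ D₂ ≰ Z, at least one of the following holds: Z ∈ D, or D₁ ∧ D₂ ∈ D, or there exists I ∉ D with D₁ ∧ D₂ ⋖ I ⋖ D₁ ∨ D₂; and (D3) for all X, W ∈ L with W ⋖ X ∨ W, if there is a unique Y with X ⋖ Y ⋖ X ∨ W and this Y lies in D, then X ∈ D or W ∈ D. -/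
import Mathlib


/-- The height of an element: length of a maximal chain from the bottom. -/
noncomputable def ht {α : Type*} [Preorder α] (x : α) : ℕ := (Order.height x).toNat

section aux

variable {α : Type*} [Lattice α] [Fintype α]

lemma ht_height_lt_top (x : α) : Order.height x < ⊤ := by
  refine lt_of_le_of_lt (b := (Fintype.card α : ℕ∞)) ?_ (by simp)
  apply Order.height_le
  intro p _
  exact_mod_cast (p.length_lt_card).le

lemma ht_coe (x : α) : (ht x : ℕ∞) = Order.height x :=
  ENat.coe_toNat (ht_height_lt_top x).ne

lemma ht_strictMono {x y : α} (h : x < y) : ht x < ht y := by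
  have := Order.height_strictMono h (ht_height_lt_top x)
  rw [← ht_coe x, ← ht_coe y] at this
  exact_mod_cast this

lemma ht_mono {x y : α} (h : x ≤ y) : ht x ≤ ht y := by
  have := Order.height_mono h
  rw [← ht_coe x, ← ht_coe y] at this
  exact_mod_cast this

/-- In a finite lattice, an element strictly between has strictly intermediate height;
hence if heights differ by exactly one, we have a covering. -/
lemma covBy_of_lt_of_ht {x y : α} (h : x < y) (hht : ht y = ht x + 1) : x ⋖ y := by
  refine ⟨h, fun c hxc hcy => ?_⟩
  have h1 := ht_strictMono hxc
  have h2 := ht_strictMono hcy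
  omega

/-- In a finite modular lattice, covers raise height by exactly one (gradedness). -/
lemma ht_covBy [IsModularLattice α] {a b : α} (hab : a ⋖ b) : ht b = ht a + 1 := by
  -- strong induction on ht b
  suffices H : ∀ n : ℕ, ∀ b a : α, ht b = n → a ⋖ b → ht b = ht a + 1 from
    H (ht b) b a rfl hab
  intro n
  induction n using Nat.strong_induction_on with
  | _ n IH =>
    intro b a hn hab
    have hlt : ht a < ht b := ht_strictMono hab.lt
    -- write ht b = m + 1
    obtain ⟨m, hm⟩ : ∃ m, ht b = m + 1 := ⟨ht b - 1, by omega⟩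
    have hb' : Order.height b = (m : ℕ∞) + 1 := by rw [← ht_coe, hm]; push_cast; ring
    obtain ⟨-, ⟨y, hyb, hy⟩, hall⟩ := Order.height_eq_coe_add_one_iff.mp hb'
    have hty : ht y = m := by
      have h := ht_coe y
      rw [hy] at h
      exact_mod_cast h
    by_cases hay : a = y
    · subst hay; omega
    · -- y ⋖ b
      have hycov : y ⋖ b := by
        refine ⟨hyb, fun c hyc hcb => ?_⟩
        have h1 := ht_strictMono hyc
        have h2 : ht c ≤ m := by
          have := hall c hcb
          rw [← ht_coe c] at this
          exact_mod_cast this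
        omega
      -- a ⊔ y = b
      have hsub : a ⊔ y = b := by
        have hle : a ⊔ y ≤ b := sup_le hab.lt.le hyb.le
        have : a < a ⊔ y := by
          rcases lt_or_eq_of_le (le_sup_left : a ≤ a ⊔ y) with h | h
          · exact h
          · exfalso
            have hya : y ≤ a := le_sup_right.trans h.symm.le
            rcases lt_or_eq_of_le hya with h' | h'
            · exact hycov.2 h' hab.lt
            · exact hay h'.symm
        rcases lt_or_eq_of_le hle with h | h
        · exact absurd h (hab.2 this)
        · exact h
      have hcov1 : a ⊓ y ⋖ a :=
        inf_covBy_of_covBy_sup_of_covBy_sup_left (hsub ▸ hab) (hsub ▸ hycov)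
      have hcov2 : a ⊓ y ⋖ y :=
        inf_covBy_of_covBy_sup_of_covBy_sup_right (hsub ▸ hab) (hsub ▸ hycov)
      have h1 : ht y = ht (a ⊓ y) + 1 := IH (ht y) (by omega) y (a ⊓ y) rfl hcov2
      have h2 : ht a = ht (a ⊓ y) + 1 := IH (ht a) (by omega) a (a ⊓ y) rfl hcov1
      omega

end aux

/-- On a finite modular lattice, the complement of a supermatroid satisfies the
dependence axioms (D2) and (D3). -/
theorem supermatroid_complement_dependence_axioms {α : Type*} [Lattice α] [Fintype α]
    [BoundedOrder α] [IsModularLattice α]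
    (𝓘 : Set α) (hne : 𝓘.Nonempty) (hideal : IsLowerSet 𝓘)
    (hH2 : ∀ X I₁ I₂ : α, Maximal (fun J => J ∈ 𝓘 ∧ J ≤ X) I₁ →
        Maximal (fun J => J ∈ 𝓘 ∧ J ≤ X) I₂ → ht I₁ = ht I₂) :
    -- (D2)
    ((∀ D₁ D₂ Z : α, D₁ ∉ 𝓘 → D₂ ∉ 𝓘 → D₁ ⋖ D₁ ⊔ D₂ → D₂ ⋖ D₁ ⊔ D₂ →
        Z ⋖ D₁ ⊔ D₂ → Z ≠ D₁ → Z ≠ D₂ → ¬ D₁ ⊓ D₂ ≤ Z →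
        (Z ∉ 𝓘 ∨ D₁ ⊓ D₂ ∉ 𝓘 ∨
          ∃ I ∈ 𝓘, D₁ ⊓ D₂ ⋖ I ∧ I ⋖ D₁ ⊔ D₂)) ∧
    -- (D3)
     (∀ X W : α, W ⋖ X ⊔ W →
        (∃! Y : α, X ⋖ Y ∧ Y ⋖ X ⊔ W) →
        (∀ Y : α, X ⋖ Y → Y ⋖ X ⊔ W → Y ∉ 𝓘) →
        X ∉ 𝓘 ∨ W ∉ 𝓘)) := by
  -- Augmentation lemma derived from hH2
  have aug : ∀ I₁ I₂ : α, I₁ ∈ 𝓘 → I₂ ∈ 𝓘 → ht I₁ < ht I₂ →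
      ∃ J ∈ 𝓘, I₁ < J ∧ J ≤ I₁ ⊔ I₂ := by
    intro I₁ I₂ h₁ h₂ hlt
    obtain ⟨M, hM1, hMmax⟩ :=
      Finite.exists_le_maximal (p := fun J => J ∈ 𝓘 ∧ J ≤ I₁ ⊔ I₂) ⟨h₁, le_sup_left⟩
    obtain ⟨M₂, hM2, hM2max⟩ :=
      Finite.exists_le_maximal (p := fun J => J ∈ 𝓘 ∧ J ≤ I₁ ⊔ I₂) ⟨h₂, le_sup_right⟩
    have hht : ht M = ht M₂ := hH2 (I₁ ⊔ I₂) M M₂ hMmax hM2max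
    have h2M : ht I₂ ≤ ht M₂ := ht_mono hM2
    have : ht I₁ < ht M := by omega
    have hM1lt : I₁ < M := lt_of_le_of_ne hM1 (fun h => by subst h; omega)
    exact ⟨M, hMmax.prop.1, hM1lt, hMmax.prop.2⟩
  constructor
  · -- (D2)
    intro D₁ D₂ Z hD₁ hD₂ hc1 hc2 hcZ hZ1 hZ2 hMZ
    by_cases hZ : Z ∈ 𝓘
    swap
    · exact Or.inl hZ
    by_cases hM : D₁ ⊓ D₂ ∈ 𝓘
    swap
    · exact Or.inr (Or.inl hM)
    refine Or.inr (Or.inr ?_)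
    set T := D₁ ⊔ D₂ with hT
    have hTnot : T ∉ 𝓘 := fun h => hD₁ (hideal le_sup_left h)
    have hMD1 : D₁ ⊓ D₂ ⋖ D₁ := inf_covBy_of_covBy_sup_of_covBy_sup_left hc1 hc2
    -- heights
    have h1 : ht T = ht D₁ + 1 := ht_covBy hc1
    have h2 : ht T = ht Z + 1 := ht_covBy hcZ
    have h3 : ht D₁ = ht (D₁ ⊓ D₂) + 1 := ht_covBy hMD1
    -- augment
    obtain ⟨J, hJ𝓘, hJ1, hJ2⟩ := aug (D₁ ⊓ D₂) Z hM hZ (by omega)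
    -- (D₁ ⊓ D₂) ⊔ Z = T
    have hsup : (D₁ ⊓ D₂) ⊔ Z = T := by
      have hle : (D₁ ⊓ D₂) ⊔ Z ≤ T :=
        sup_le (le_trans inf_le_left le_sup_left) hcZ.lt.le
      have hlt : Z < (D₁ ⊓ D₂) ⊔ Z :=
        lt_of_le_of_ne le_sup_right (fun h => hMZ (le_sup_left.trans h.symm.le))
      rcases lt_or_eq_of_le hle with h | h
      · exact absurd h (hcZ.2 hlt)
      · exact h
    rw [hsup] at hJ2
    have hJT : J < T := lt_of_le_of_ne hJ2 (fun h => hTnot (h ▸ hJ𝓘))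
    have h4 := ht_strictMono hJ1
    have h5 := ht_strictMono hJT
    have h6 : ht J = ht (D₁ ⊓ D₂) + 1 := by omega
    refine ⟨J, hJ𝓘, covBy_of_lt_of_ht hJ1 h6, covBy_of_lt_of_ht hJT (by omega)⟩
  · -- (D3)
    intro X W hWcov huniq hforbid
    by_contra hcon
    push_neg at hcon
    obtain ⟨hX, hW⟩ := hcon
    obtain ⟨Y, ⟨hXY, hYT⟩, hYuniq⟩ := huniq
    have hYnot : Y ∉ 𝓘 := hforbid Y hXY hYT
    set T := X ⊔ W with hT
    have hTnot : T ∉ 𝓘 := fun h => hYnot (hideal hYT.lt.le h)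
    have h1 : ht Y = ht X + 1 := ht_covBy hXY
    have h2 : ht T = ht Y + 1 := ht_covBy hYT
    have h3 : ht T = ht W + 1 := ht_covBy hWcov
    obtain ⟨J, hJ𝓘, hJ1, hJ2⟩ := aug X W hX hW (by omega)
    have hJT : J < T := lt_of_le_of_ne hJ2 (fun h => hTnot (h ▸ hJ𝓘))
    have h4 := ht_strictMono hJ1
    have h5 := ht_strictMono hJT
    have h6 : ht J = ht X + 1 := by omega
    have hJY : J = Y :=
      hYuniq J ⟨covBy_of_lt_of_ht hJ1 h6, covBy_of_lt_of_ht hJT (by omega)⟩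
    exact hYnot (hJY ▸ hJ𝓘)
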